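/- Let M be a 1×q pattern vector (a row pattern matrix) and N an r×q pattern matrix, and suppose every entry of the (r+1)×q pattern matrix T = col(M, N) in rows not belonging to a subset S ⊆ {1,...,r+1} with 1 ∉ S is such that, for every column i, either all entries T_{ji} with j ∉ S are 0, or the entries can be chosen to sum to zero (i.e., the symbolic column sum over rows outside S is 0 or ?). Then there exists a real matrix T₀ ∈ P(T) and a real row vector z with z_1 ≠ 0 such that z^T T₀ = 0; in particular, M is not independent of N. -/

import Mathlib

inductive PSym | zero | star | any
deriving DecidableEq

namespace PSym

def symAdd : PSym → PSym → PSym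
  | zero, x => x
  | x, zero => x
  | _, _ => any

def symMul : PSym → PSym → PSym
  | zero, _ => zero
  | _, zero => zero
  | star, star => star
  | _, _ => any

instance : Zero PSym := ⟨zero⟩
instance : Add PSym := ⟨symAdd⟩

instance : AddCommMonoid PSym where
  add_assoc a b c := by cases a <;> cases b <;> cases c <;> rfl
  zero_add a := by cases a <;> rfl
  add_zero a := by cases a <;> rfl
  add_comm a b := by cases a <;> cases b <;> rfl
  nsmul := nsmulRec

end PSym

/-- The pattern class of a pattern matrix. -/
def PatClass {p q : Type*} (M : Matrix p q PSym) : Set (Matrix p q ℝ) :=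
  {A | ∀ i j, (M i j = PSym.zero → A i j = 0) ∧ (M i j = PSym.star → A i j ≠ 0)}

/-- Product of pattern matrices. -/
def patMul {p q s : ℕ} (M : Matrix (Fin p) (Fin q) PSym) (N : Matrix (Fin q) (Fin s) PSym) :
    Matrix (Fin p) (Fin s) PSym :=
  fun i j => ∑ k, PSym.symMul (M i k) (N k j)

/-- A 1×q pattern vector `M` is independent of an r×q pattern matrix `N`. -/
def Independent {q r : ℕ} (M : Matrix (Fin 1) (Fin q) PSym) (N : Matrix (Fin r) (Fin q) PSym) : Prop :=
  ∀ M₀ ∈ PatClass M, ∀ N₀ ∈ PatClass N, ∀ (z₁ : ℝ) (z₂ : Fin r → ℝ),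
    (∀ j, z₁ * M₀ 0 j + ∑ i, z₂ i * N₀ i j = 0) → z₁ = 0

/-!
Every real value compatible with a symbolic sum is a sum of real values compatible with the
summands: peel off one summand at a time, splitting the target between it and the rest as the two
symbols permit. Since each column sum over the rows outside `S` is `0` or `?`, the value `0` is
compatible with it; realizing the rows in `S` arbitrarily then gives `T₀ ∈ P(T)` whose rows outside
`S` sum to zero. The indicator vector of the complement of `S` is a left kernel vector of `T₀`, and
its first entry is `1` because the row of `M` lies outside `S`.
-/

namespace PSym

def Realizes (s : PSym) (x : ℝ) : Prop :=
  (s = zero → x = 0) ∧ (s = star → x ≠ 0)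

@[simp]
theorem realizes_zero_iff {x : ℝ} : Realizes zero x ↔ x = 0 := by
  simp [Realizes]

@[simp]
theorem realizes_star_iff {x : ℝ} : Realizes star x ↔ x ≠ 0 := by
  simp [Realizes]

@[simp]
theorem realizes_any (x : ℝ) : Realizes any x := by
  simp [Realizes]

theorem exists_realizes (s : PSym) : ∃ x, Realizes s x := by
  cases s
  exacts [⟨0, realizes_zero_iff.2 rfl⟩, ⟨1, realizes_star_iff.2 one_ne_zero⟩, ⟨0, realizes_any 0⟩]

theorem realizes_zero_of_ne_star {s : PSym} (hs : s ≠ star) : Realizes s 0 :=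
  ⟨fun _ => rfl, fun h => absurd h hs⟩

theorem exists_realizes_add_eq {a b : PSym} {t : ℝ} (ht : Realizes (a + b) t) :
    ∃ x y, Realizes a x ∧ Realizes b y ∧ x + y = t := by
  cases a <;> cases b
  case star.star =>
    obtain ⟨c, hc⟩ := Infinite.exists_notMem_finset ({0, t} : Finset ℝ)
    simp only [Finset.mem_insert, Finset.mem_singleton, not_or] at hc
    exact ⟨c, t - c, realizes_star_iff.2 hc.1, realizes_star_iff.2 (sub_ne_zero.2 (Ne.symm hc.2)),
      add_sub_cancel c t⟩
  case star.any =>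
    exact ⟨1, t - 1, realizes_star_iff.2 one_ne_zero, realizes_any _, add_sub_cancel 1 t⟩
  case any.star =>
    exact ⟨t - 1, 1, realizes_any _, realizes_star_iff.2 one_ne_zero, sub_add_cancel t 1⟩
  case any.any => exact ⟨t, 0, realizes_any t, realizes_any 0, add_zero t⟩
  case zero.zero | zero.star | zero.any => exact ⟨0, t, realizes_zero_iff.2 rfl, ht, zero_add t⟩
  case star.zero | any.zero => exact ⟨t, 0, ht, realizes_zero_iff.2 rfl, add_zero t⟩

theorem exists_realizes_sum_eq {α : Type*} [DecidableEq α] (f : α → PSym) (A : Finset α)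
    {t : ℝ} (ht : Realizes (∑ a ∈ A, f a) t) :
    ∃ v : α → ℝ, (∀ a ∈ A, Realizes (f a) (v a)) ∧ ∑ a ∈ A, v a = t := by
  induction A using Finset.induction_on generalizing t with
  | empty => exact ⟨0, by simp, (ht.1 rfl).symm⟩
  | @insert a A ha ih =>
    rw [Finset.sum_insert ha] at ht
    obtain ⟨x, y, hx, hy, rfl⟩ := exists_realizes_add_eq ht
    obtain ⟨v, hv, rfl⟩ := ih hy
    refine ⟨Function.update v a x, ?_, ?_⟩
    · rw [Finset.forall_mem_insert, Function.update_self]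
      refine ⟨hx, fun b hb => ?_⟩
      rw [Function.update_of_ne (ne_of_mem_of_not_mem hb ha)]
      exact hv b hb
    · rw [Finset.sum_insert ha, Function.update_self, Finset.sum_update_of_notMem ha]

end PSym

theorem mem_patClass_iff {ι κ : Type*} {T : Matrix ι κ PSym} {T₀ : Matrix ι κ ℝ} :
    T₀ ∈ PatClass T ↔ ∀ j i, (T j i).Realizes (T₀ j i) :=
  Iff.rfl

theorem exists_mem_patClass_sum_rows_eq_zero {ι κ : Type*} [DecidableEq ι]
    (T : Matrix ι κ PSym) (R : Finset ι) (hR : ∀ i, ∑ j ∈ R, T j i ≠ PSym.star) :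
    ∃ T₀ ∈ PatClass T, ∀ i, ∑ j ∈ R, T₀ j i = 0 := by
  choose v hv hv_sum using fun i =>
    PSym.exists_realizes_sum_eq (fun j => T j i) R (PSym.realizes_zero_of_ne_star (hR i))
  choose w hw using fun j i => PSym.exists_realizes (T j i)
  refine ⟨Matrix.of fun j i => if j ∈ R then v i j else w j i, ?_, fun i => ?_⟩
  · refine mem_patClass_iff.2 fun j i => ?_
    by_cases hj : j ∈ R
    · simpa [hj] using hv i j hj
    · simpa [hj] using hw j i
  · rw [← hv_sum i]
    exact Finset.sum_congr rfl fun j hj => by simp [hj]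

theorem not_independent_of_exists_kernel_vector {q r : ℕ}
    (M : Matrix (Fin 1) (Fin q) PSym) (N : Matrix (Fin r) (Fin q) PSym)
    (h : ∃ T₀ ∈ PatClass (Matrix.of (Fin.cons (M 0) N) : Matrix (Fin (r + 1)) (Fin q) PSym),
      ∃ z : Fin (r + 1) → ℝ, z 0 ≠ 0 ∧ ∀ i : Fin q, ∑ j, z j * T₀ j i = 0) :
    ¬ Independent M N := by
  obtain ⟨T₀, hT₀, z, hz0, hz⟩ := h
  intro hind
  have hM : (Matrix.of fun _ i => T₀ 0 i) ∈ PatClass M := fun k i => by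
    obtain rfl := Subsingleton.elim k 0
    exact hT₀ 0 i
  have hN : (Matrix.of fun j i => T₀ j.succ i) ∈ PatClass N := fun j i => hT₀ j.succ i
  refine hz0 (hind _ hM _ hN (z 0) (fun j => z j.succ) fun i => ?_)
  simpa [Fin.sum_univ_succ] using hz i

/-- If `S` is a set of rows of `T = col(M, N)` not containing the
first row (the row of `M`), and for every column the symbolic sum of the
entries in the rows outside `S` is not `*` (i.e. it is `0` or `?`), then there
is an instance `T₀ ∈ P(T)` and a row vector `z` with `z 0 ≠ 0` and `zᵀT₀ = 0`;
in particular `M` is not independent of `N`. -/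
theorem exists_kernel_vector_of_symbolic_col_sums {q r : ℕ}
    (M : Matrix (Fin 1) (Fin q) PSym) (N : Matrix (Fin r) (Fin q) PSym)
    (S : Finset (Fin (r + 1))) (hS : (0 : Fin (r + 1)) ∉ S)
    (hcol : ∀ i : Fin q,
      (∑ j ∈ Sᶜ, (Matrix.of (Fin.cons (M 0) N) : Matrix (Fin (r + 1)) (Fin q) PSym) j i)
        ≠ PSym.star) :
    (∃ T₀ ∈ PatClass (Matrix.of (Fin.cons (M 0) N) : Matrix (Fin (r + 1)) (Fin q) PSym),
      ∃ z : Fin (r + 1) → ℝ, z 0 ≠ 0 ∧ ∀ i : Fin q, ∑ j, z j * T₀ j i = 0) ∧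
    ¬ Independent M N := by
  obtain ⟨T₀, hT₀, hsum⟩ := exists_mem_patClass_sum_rows_eq_zero _ Sᶜ hcol
  have hker : ∃ z : Fin (r + 1) → ℝ, z 0 ≠ 0 ∧ ∀ i : Fin q, ∑ j, z j * T₀ j i = 0 := by
    refine ⟨fun j => if j ∈ Sᶜ then 1 else 0, by simp [hS], fun i => ?_⟩
    simpa only [ite_mul, one_mul, zero_mul, Finset.sum_ite_mem, Finset.univ_inter] using hsum i
  exact ⟨⟨T₀, hT₀, hker⟩, not_independent_of_exists_kernel_vector M N ⟨T₀, hT₀, hker⟩⟩
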